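/- Let S be a b-weakly right cancellative semigroup (for some b ∈ ℕ) and let A ⊆ S be thick, meaning for every finite nonempty F ⊆ S there exists s ∈ S with Fs ⊆ A. Then A is a D-set with respect to every net F in P_f(S). -/

import Mathlib

open scoped Classical symmDiff

/-- The translate `F · s` of a finite piece `F` by an element of `S ∪ {1}`
(`none` meaning "no shift"). -/
def netShift {S : Type*} [Mul S] (F : Set S) : Option S → Set S
  | none => F
  | some t => (· * t) '' F

/-- Upper Banach density of `A ⊆ S` with respect to a net `F = ⟨F i⟩` of finite
nonempty subsets of `S`, indexed by a directed preorder `I`. -/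
noncomputable def uBD {S : Type*} [Mul S] {I : Type*} [Preorder I]
    (F : I → Set S) (A : Set S) : ℝ :=
  sSup {α : ℝ | ∀ i₀ : I, ∃ i, i₀ ≤ i ∧ ∃ s : Option S,
    α * ((F i).ncard : ℝ) ≤ ((A ∩ netShift (F i) s).ncard : ℝ)}

attribute [local instance] Ultrafilter.mul

universe u

/-!
The ultrafilters all of whose members have positive upper Banach density form a closed right
ideal `D` of `βS`: if `C ∈ q * r` then `B = {a | a⁻¹C ∈ r}` belongs to `q`, so has positive
density, and right-translating a finite piece of `B` by a common point `t` of the finitely many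
`a⁻¹C` lands in `C`, losing at most a factor `b` of its size. Since positive density is
partition regular, `D` is nonempty. Thickness of `A` makes the closed left ideal
`L = {p | A ∈ p ∧ ∀ a, a⁻¹A ∈ p}` nonempty. So `D ∩ L` is a nonempty compact subsemigroup, and
Ellis' theorem gives an idempotent in it; it contains `A` and all its members have positive
density.
-/

theorem exists_idempotent_mem_inter_of_isClosed_ideals {M : Type*} [Semigroup M]
    [TopologicalSpace M] [CompactSpace M] [T2Space M] (hcont : ∀ r : M, Continuous (· * r))
    {R L : Set M} (hR : IsClosed R) (hL : IsClosed L) (hRne : R.Nonempty) (hLne : L.Nonempty)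
    (hRmul : ∀ x ∈ R, ∀ y, x * y ∈ R) (hLmul : ∀ x, ∀ y ∈ L, x * y ∈ L) :
    ∃ m ∈ R ∩ L, m * m = m := by
  obtain ⟨r, hr⟩ := hRne
  obtain ⟨l, hl⟩ := hLne
  exact exists_idempotent_in_compact_subsemigroup hcont (R ∩ L) ⟨r * l, hRmul r hr l, hLmul r l hl⟩
    (hR.inter hL).isCompact fun x hx y hy => ⟨hRmul x hx.1 y, hLmul x y hy.2⟩

namespace Ultrafilter

variable {α : Type*}

theorem isClosed_setOf_forall_mem (q : Set α → Prop) :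
    IsClosed {U : Ultrafilter α | ∀ s ∈ U, q s} := by
  simp only [Set.ofPred_forall]
  refine isClosed_iInter fun s => ?_
  by_cases hq : q s
  · simp only [hq, imp_true_iff, Set.ofPred_true, isClosed_univ]
  · simp only [hq, imp_false]
    exact (ultrafilter_isOpen_basic s).isClosed_compl

theorem exists_forall_mem_of_partitionRegular {q : Set α → Prop} (hempty : ¬ q ∅)
    (hmono : ∀ s t, s ⊆ t → q s → q t) (hunion : ∀ s t, q (s ∪ t) → q s ∨ q t)
    (huniv : q Set.univ) : ∃ U : Ultrafilter α, ∀ s ∈ U, q s := by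
  let f : Filter α := Filter.comk (¬ q ·) hempty (fun t ht s hst hs => ht (hmono s t hst hs))
    fun s hs t ht hst => (hunion s t hst).elim hs ht
  have : f.NeBot := ⟨fun h => Filter.empty_mem_iff_bot.2 h (Set.compl_empty ▸ huniv)⟩
  refine ⟨Ultrafilter.of f, fun s hs => by_contra fun hqs => ?_⟩
  exact (Ultrafilter.compl_mem_iff_notMem.1 (Ultrafilter.of_le f (by simpa [f] using hqs))) hs

theorem exists_forall_mem_of_iInter_nonempty {ι : Type*} (g : ι → Set α)
    (h : ∀ u : Finset ι, (⋂ i ∈ u, g i).Nonempty) : ∃ U : Ultrafilter α, ∀ i, g i ∈ U := by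
  obtain ⟨U, hU⟩ := exists_ultrafilter_of_finite_inter_nonempty (Set.range g) fun T hT => by
    obtain ⟨u, -, hu, hTu⟩ := Set.exists_subset_image_finite_and.1
      ⟨(T : Set (Set α)), by rwa [← Set.image_univ] at hT, T.finite_toSet, rfl⟩
    obtain ⟨v, rfl⟩ := hu.exists_finset_coe
    rw [hTu, Set.sInter_image]
    simpa using h v
  exact ⟨U, fun i => hU ⟨i, rfl⟩⟩

end Ultrafilter

theorem Set.ncard_le_mul_ncard_image {α β : Type*} {f : α → β} {s : Set α} (hs : s.Finite)
    (n : ℕ) (hn : ∀ y ∈ f '' s, (s ∩ f ⁻¹' {y}).ncard ≤ n) : s.ncard ≤ n * (f '' s).ncard := by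
  obtain ⟨s, rfl⟩ := hs.exists_finset_coe
  rw [← Finset.coe_image, Set.ncard_coe_finset, Set.ncard_coe_finset]
  refine Finset.card_le_mul_card_image s n fun y hy => ?_
  rw [← Set.ncard_coe_finset, Finset.coe_filter]
  exact hn y (by simpa using hy)

def IsWeaklyRightCancel (S : Type*) [Mul S] (b : ℕ) : Prop :=
  ∀ t u : S, {s : S | s * t = u}.Finite ∧ {s : S | s * t = u}.ncard ≤ b

theorem IsWeaklyRightCancel.pos {S : Type*} [Mul S] [Nonempty S] {b : ℕ}
    (hb : IsWeaklyRightCancel S b) : 0 < b := by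
  obtain ⟨t⟩ := ‹Nonempty S›
  exact ((Set.ncard_pos (hb t (t * t)).1).2 ⟨t, rfl⟩).trans_le (hb t (t * t)).2

section Density

variable {S : Type*} [Mul S] {I : Type*} [Preorder I] {F : I → Set S}

theorem netShift_finite {F : Set S} (hF : F.Finite) (s : Option S) :
    (netShift F s).Finite := by
  cases s with
  | none => exact hF
  | some t => exact hF.image _

theorem ncard_inter_netShift_le {F : Set S} (hF : F.Finite) (C : Set S) (s : Option S) :
    (C ∩ netShift F s).ncard ≤ F.ncard := by
  refine (Set.ncard_le_ncard Set.inter_subset_right (netShift_finite hF s)).trans ?_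
  cases s with
  | none => exact le_rfl
  | some t => exact Set.ncard_image_le hF

/-- `uBD F C` is the supremum of the `α` with `IsCofinalRatio F C α`. -/
def IsCofinalRatio (F : I → Set S) (C : Set S) (α : ℝ) : Prop :=
  ∀ i₀ : I, ∃ i, i₀ ≤ i ∧ ∃ s : Option S,
    α * ((F i).ncard : ℝ) ≤ ((C ∩ netShift (F i) s).ncard : ℝ)

def HasPosDensity (F : I → Set S) (C : Set S) : Prop :=
  ∃ α > 0, IsCofinalRatio F C α

theorem isCofinalRatio_zero (C : Set S) : IsCofinalRatio F C 0 := fun i₀ =>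
  ⟨i₀, le_rfl, none, by simp⟩

theorem IsCofinalRatio.le_one [Nonempty I] (hfin : ∀ i, (F i).Finite)
    (hne : ∀ i, (F i).Nonempty) {C : Set S} {α : ℝ} (h : IsCofinalRatio F C α) : α ≤ 1 := by
  obtain ⟨i, -, s, hle⟩ := h (Classical.arbitrary I)
  have hpos : (0 : ℝ) < (F i).ncard := by exact_mod_cast (Set.ncard_pos (hfin i)).2 (hne i)
  have hC : ((C ∩ netShift (F i) s).ncard : ℝ) ≤ (F i).ncard := by
    exact_mod_cast ncard_inter_netShift_le (hfin i) C s
  exact (mul_le_iff_le_one_left hpos).1 (hle.trans hC)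

theorem uBD_pos_iff [Nonempty I] (hfin : ∀ i, (F i).Finite) (hne : ∀ i, (F i).Nonempty)
    (C : Set S) : 0 < uBD F C ↔ HasPosDensity F C := by
  constructor
  · intro h
    obtain ⟨α, hα, hpos⟩ := exists_lt_of_lt_csSup ⟨0, isCofinalRatio_zero (F := F) C⟩ h
    exact ⟨α, hpos, hα⟩
  · rintro ⟨α, hpos, hα⟩
    exact hpos.trans_le (le_csSup ⟨1, fun _ h => IsCofinalRatio.le_one hfin hne h⟩ hα)

theorem not_hasPosDensity_empty [Nonempty I] (hfin : ∀ i, (F i).Finite)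
    (hne : ∀ i, (F i).Nonempty) : ¬ HasPosDensity F (∅ : Set S) := by
  rintro ⟨α, hpos, hα⟩
  obtain ⟨i, -, s, hle⟩ := hα (Classical.arbitrary I)
  have hF : (0 : ℝ) < (F i).ncard := by exact_mod_cast (Set.ncard_pos (hfin i)).2 (hne i)
  simp only [Set.empty_inter, Set.ncard_empty, Nat.cast_zero] at hle
  exact (mul_pos hpos hF).not_ge hle

theorem hasPosDensity_univ : HasPosDensity F (Set.univ : Set S) :=
  ⟨1, one_pos, fun i₀ => ⟨i₀, le_rfl, none, by simp [netShift]⟩⟩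

theorem HasPosDensity.mono (hfin : ∀ i, (F i).Finite) {C C' : Set S} (hCC' : C ⊆ C')
    (h : HasPosDensity F C) : HasPosDensity F C' := by
  obtain ⟨α, hpos, hα⟩ := h
  refine ⟨α, hpos, fun i₀ => ?_⟩
  obtain ⟨i, hi, s, hle⟩ := hα i₀
  refine ⟨i, hi, s, hle.trans ?_⟩
  exact_mod_cast Set.ncard_le_ncard (Set.inter_subset_inter_left _ hCC')
    ((netShift_finite (hfin i) s).subset Set.inter_subset_right)

theorem HasPosDensity.union (hdir : ∀ i j : I, ∃ k, i ≤ k ∧ j ≤ k) {B C : Set S}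
    (h : HasPosDensity F (B ∪ C)) : HasPosDensity F B ∨ HasPosDensity F C := by
  obtain ⟨α, hpos, hα⟩ := h
  by_contra! hBC
  have hB : ¬ IsCofinalRatio F B (α / 2) := fun h => hBC.1 ⟨α / 2, half_pos hpos, h⟩
  have hC : ¬ IsCofinalRatio F C (α / 2) := fun h => hBC.2 ⟨α / 2, half_pos hpos, h⟩
  simp only [IsCofinalRatio, not_forall, not_exists, not_and, not_le] at hB hC
  obtain ⟨iB, hiB⟩ := hB
  obtain ⟨iC, hiC⟩ := hC
  obtain ⟨k, hBk, hCk⟩ := hdir iB iC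
  obtain ⟨i, hki, s, hle⟩ := hα k
  have hsplit : (((B ∪ C) ∩ netShift (F i) s).ncard : ℝ)
      ≤ (B ∩ netShift (F i) s).ncard + (C ∩ netShift (F i) s).ncard := by
    rw [Set.union_inter_distrib_right]
    exact_mod_cast Set.ncard_union_le _ _
  linarith [hiB i (hBk.trans hki) s, hiC i (hCk.trans hki) s]

end Density

theorem image_mul_right_netShift {S : Type*} [Semigroup S] (F : Set S) (s : Option S) (t : S) :
    (· * t) '' netShift F s = netShift F (some (s.elim t (· * t))) := by
  cases s with
  | none => rfl
  | some u => simp only [netShift, Option.elim, Set.image_image, mul_assoc]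

theorem HasPosDensity.of_preimage_mul_left {S : Type*} [Semigroup S] {I : Type*} [Preorder I]
    {F : I → Set S} (hfin : ∀ i, (F i).Finite) {b : ℕ} (hb : IsWeaklyRightCancel S b)
    {C : Set S} {r : Ultrafilter S} (h : HasPosDensity F {a | (a * ·) ⁻¹' C ∈ r}) :
    HasPosDensity F C := by
  obtain ⟨α, hpos, hα⟩ := h
  have : Nonempty S := ⟨(r.nonempty_of_mem Filter.univ_mem).some⟩
  have hb0 : (0 : ℝ) < b := by exact_mod_cast hb.pos
  refine ⟨α / b, div_pos hpos hb0, fun i₀ => ?_⟩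
  obtain ⟨i, hi, s, hle⟩ := hα i₀
  set H := {a | (a * ·) ⁻¹' C ∈ r} ∩ netShift (F i) s
  have hH : H.Finite := (netShift_finite (hfin i) s).subset Set.inter_subset_right
  obtain ⟨t, ht⟩ : ∃ t, ∀ a ∈ H, a * t ∈ C := by
    obtain ⟨t, ht⟩ := r.nonempty_of_mem ((Filter.biInter_mem hH).2 fun a ha => ha.1)
    exact ⟨t, by simpa using ht⟩
  set s' := some (s.elim t (· * t))
  have himage : (· * t) '' H ⊆ C ∩ netShift (F i) s' := by
    rintro _ ⟨a, ha, rfl⟩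
    exact ⟨ht a ha, image_mul_right_netShift (F i) s t ▸ Set.mem_image_of_mem _ ha.2⟩
  have hcount : H.ncard ≤ b * ((· * t) '' H).ncard :=
    Set.ncard_le_mul_ncard_image hH b fun y _ =>
      (Set.ncard_le_ncard Set.inter_subset_right (hb t y).1).trans (hb t y).2
  refine ⟨i, hi, s', ?_⟩
  calc α / b * (F i).ncard = α * (F i).ncard / b := div_mul_eq_mul_div _ _ _
    _ ≤ H.ncard / b := by gcongr
    _ ≤ ((· * t) '' H).ncard := by
        rw [div_le_iff₀ hb0, mul_comm]
        exact_mod_cast hcount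
    _ ≤ (C ∩ netShift (F i) s').ncard := by
        exact_mod_cast Set.ncard_le_ncard himage
          ((netShift_finite (hfin i) s').subset Set.inter_subset_right)

section Ideals

variable {S : Type*} [Semigroup S]

def posDensityUltrafilters {I : Type*} [Preorder I] (F : I → Set S) : Set (Ultrafilter S) :=
  {p | ∀ C ∈ p, HasPosDensity F C}

/-- The largest left ideal of `βS` contained in the closure of `A`. -/
def leftIdealIn (A : Set S) : Set (Ultrafilter S) :=
  {p | A ∈ p ∧ ∀ a, (a * ·) ⁻¹' A ∈ p}

theorem isClosed_posDensityUltrafilters {I : Type*} [Preorder I] (F : I → Set S) :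
    IsClosed (posDensityUltrafilters F) :=
  Ultrafilter.isClosed_setOf_forall_mem _

theorem posDensityUltrafilters_nonempty {I : Type*} [Preorder I] [Nonempty I] {F : I → Set S}
    (hfin : ∀ i, (F i).Finite) (hne : ∀ i, (F i).Nonempty)
    (hdir : ∀ i j : I, ∃ k, i ≤ k ∧ j ≤ k) : (posDensityUltrafilters F).Nonempty :=
  Ultrafilter.exists_forall_mem_of_partitionRegular (not_hasPosDensity_empty hfin hne)
    (fun _ _ hst h => h.mono hfin hst) (fun _ _ h => h.union hdir) hasPosDensity_univ

theorem mul_mem_posDensityUltrafilters {I : Type*} [Preorder I] {F : I → Set S}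
    (hfin : ∀ i, (F i).Finite) {b : ℕ} (hb : IsWeaklyRightCancel S b) {q : Ultrafilter S}
    (hq : q ∈ posDensityUltrafilters F) (r : Ultrafilter S) :
    q * r ∈ posDensityUltrafilters F := fun _ hC =>
  (hq _ hC).of_preimage_mul_left hfin hb

theorem isClosed_leftIdealIn (A : Set S) : IsClosed (leftIdealIn A) := by
  rw [leftIdealIn, Set.ofPred_and, Set.ofPred_forall]
  exact (ultrafilter_isClosed_basic A).inter
    (isClosed_iInter fun a => ultrafilter_isClosed_basic _)

theorem mul_mem_leftIdealIn {A : Set S} (r : Ultrafilter S) {q : Ultrafilter S}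
    (hq : q ∈ leftIdealIn A) : r * q ∈ leftIdealIn A := by
  refine ⟨(Ultrafilter.eventually_mul r q (· ∈ A)).2 (.of_forall hq.2), fun a =>
    (Ultrafilter.eventually_mul r q (a * · ∈ A)).2 (.of_forall fun m => ?_)⟩
  simp only [← mul_assoc]
  exact hq.2 (a * m)

theorem leftIdealIn_nonempty [Nonempty S] {A : Set S}
    (hthick : ∀ G : Finset S, G.Nonempty → ∃ s : S, ∀ x ∈ G, x * s ∈ A) :
    (leftIdealIn A).Nonempty := by
  obtain ⟨x₀⟩ := ‹Nonempty S›
  obtain ⟨p, hp⟩ := Ultrafilter.exists_forall_mem_of_iInter_nonempty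
    (fun o : Option S => o.elim A fun a => (a * ·) ⁻¹' A) fun u => by
      obtain ⟨s, hs⟩ := hthick (insert x₀ (u.image fun o => o.elim x₀ (· * x₀)))
        (Finset.insert_nonempty _ _)
      refine ⟨x₀ * s, Set.mem_iInter₂.2 fun o ho => ?_⟩
      have := hs _ (Finset.mem_insert_of_mem (Finset.mem_image_of_mem _ ho))
      cases o <;> simpa [mul_assoc] using this
  exact ⟨p, hp none, fun a => hp (some a)⟩

end Ideals

theorem thick_is_DSet {S : Type*} [Semigroup S] (b : ℕ)
    (hb : ∀ t u : S, {s : S | s * t = u}.Finite ∧ {s : S | s * t = u}.ncard ≤ b)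
    (A : Set S) (hthick : ∀ G : Finset S, G.Nonempty → ∃ s : S, ∀ x ∈ G, x * s ∈ A) :
    ∀ (I : Type u) (_ : Preorder I) (_ : Nonempty I) (F : I → Set S),
      (∀ i, (F i).Finite) → (∀ i, (F i).Nonempty) →
      (∀ i j : I, ∃ k, i ≤ k ∧ j ≤ k) →
      ∃ p : Ultrafilter S, p * p = p ∧ (∀ C ∈ p, 0 < uBD F C) ∧ A ∈ p := by
  intro I _ _ F hfin hne hdir
  have : Nonempty S := ⟨(hne (Classical.arbitrary I)).some⟩
  let := Ultrafilter.semigroup (M := S)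
  obtain ⟨p, ⟨hpD, hpA, -⟩, hpp⟩ := exists_idempotent_mem_inter_of_isClosed_ideals
    Ultrafilter.continuous_mul_left (isClosed_posDensityUltrafilters F) (isClosed_leftIdealIn A)
    (posDensityUltrafilters_nonempty hfin hne hdir) (leftIdealIn_nonempty hthick)
    (fun _ hq => mul_mem_posDensityUltrafilters hfin hb hq) (fun r _ => mul_mem_leftIdealIn r)
  exact ⟨p, hpp, fun C hC => (uBD_pos_iff hfin hne C).2 (hpD C hC), hpA⟩
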